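/- Let h : 𝕋 → 𝕋 be given by h(x) = kx + θ(x) with θ : 𝕋 → ℝ real-analytic and nonconstant, k ∈ ℤ, and let q be the largest positive integer with θ(x + 1/q) = θ(x) for all x. If the identity θ(z) − θ(z−ω) = c holds for all z (for some constant c and some ω ∈ 𝕋), then ω = p/q for some p ∈ {0,1,…,q−1}. -/

import Mathlib

/-- Let `θ : ℝ → ℝ` be real-analytic, 1-periodic and nonconstant, and let `q` be the largest
positive integer such that `θ` is `1/q`-periodic. If `θ(x) − θ(x − ω) = c` for all `x`
(for some constant `c` and some `ω`), then `ω = p/q` for some integer `p`. -/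
theorem cohomological_eq_forces_rational_freq (θ : ℝ → ℝ)
    (hanal : ∀ x, AnalyticAt ℝ θ x)
    (hper : ∀ x, θ (x + 1) = θ x)
    (hnonconst : ∃ x y, θ x ≠ θ y)
    (q : ℕ) (hq : 0 < q) (hqper : ∀ x, θ (x + 1 / q) = θ x)
    (hqmax : ∀ q' : ℕ, 0 < q' → (∀ x, θ (x + 1 / q') = θ x) → q' ≤ q)
    (ω c : ℝ) (h : ∀ x, θ x - θ (x - ω) = c) :
    ∃ p : ℤ, (q : ℝ) * ω = p := by
  have hcont : Continuous θ := continuous_iff_continuousAt.2 fun x => (hanal x).continuousAt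
  -- c = 0
  have hc : c = 0 := by
    have hb : Bornology.IsBounded (Set.range θ) :=
      Function.Periodic.isBounded_of_continuous hper one_ne_zero hcont
    obtain ⟨C, hC⟩ := Metric.isBounded_iff.1 hb
    have key : ∀ n : ℕ, θ 0 - θ (0 - n * ω) = n * c := by
      intro n
      induction n with
      | zero => simp
      | succ n ih =>
        have h2 := h (0 - n * ω)
        push_cast
        have : (0:ℝ) - n * ω - ω = 0 - (n + 1) * ω := by ring
        rw [this] at h2
        push_cast at ih
        linarith
    by_contra hc0
    obtain ⟨n, hn⟩ := exists_nat_gt ((C + 1) / |c|)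
    have h1 := key n
    have h2 : dist (θ 0) (θ (0 - n * ω)) ≤ C :=
      hC (Set.mem_range_self _) (Set.mem_range_self _)
    rw [Real.dist_eq, h1, abs_mul, Nat.abs_cast] at h2
    have hcpos : 0 < |c| := abs_pos.2 hc0
    rw [div_lt_iff₀ hcpos] at hn
    nlinarith
  have hω : ∀ x, θ (x + ω) = θ x := by
    intro x
    have := h (x + ω)
    simp only [hc, add_sub_cancel_right] at this
    linarith
  -- subgroup of periods
  set S : AddSubgroup ℝ :=
    { carrier := {t | ∀ x, θ (x + t) = θ x}
      zero_mem' := by intro x; simp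
      add_mem' := by
        intro a b ha hb x
        rw [← add_assoc, hb, ha]
      neg_mem' := by
        intro a ha x
        have := ha (x + -a)
        rw [neg_add_cancel_right] at this
        exact this.symm } with hS
  have hSmem : ∀ t, t ∈ S ↔ ∀ x, θ (x + t) = θ x := fun t => Iff.rfl
  have hnd : ¬ Dense (S : Set ℝ) := by
    intro hd
    obtain ⟨x, y, hxy⟩ := hnonconst
    apply hxy
    have : (fun t => θ (x + t)) = fun _ => θ x := by
      apply Continuous.ext_on hd (hcont.comp (continuous_const.add continuous_id)) continuous_const
      intro t ht
      exact ht x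
    have := congrFun this (y - x)
    simpa using this.symm
  rcases S.dense_or_cyclic with hd | ⟨a, ha⟩
  · exact absurd hd hnd
  have hqS : (1 / q : ℝ) ∈ S := fun x => hqper x
  have hωS : ω ∈ S := fun x => hω x
  rw [ha, AddSubgroup.mem_closure_singleton] at hqS hωS
  obtain ⟨n, hn⟩ := hqS
  obtain ⟨p₀, hp₀⟩ := hωS
  have hq0 : (0:ℝ) < (q:ℝ) := by exact_mod_cast hq
  have hq1 : (0:ℝ) < 1 / q := by positivity
  have ha0 : a ≠ 0 := by
    rintro rfl
    rw [smul_zero] at hn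
    exact hq1.ne' hn.symm
  have hn0 : n ≠ 0 := by
    rintro rfl
    rw [zero_zsmul] at hn
    exact hq1.ne' hn.symm
  have hna : (0:ℝ) < (n.natAbs : ℝ) := by
    exact_mod_cast Int.natAbs_pos.2 hn0
  -- |a| = 1/(n.natAbs * q)
  have habs : |a| = 1 / ((n.natAbs : ℝ) * q) := by
    have hmul : (n.natAbs : ℝ) * |a| = 1 / q := by
      rw [Nat.cast_natAbs, Int.cast_abs, ← abs_mul]
      rw [zsmul_eq_mul] at hn
      rw [hn, abs_of_pos hq1]
    field_simp at hmul ⊢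
    linear_combination hmul
  have haS : |a| ∈ S := by
    rcases abs_choice a with h1 | h1 <;> rw [h1] <;> rw [ha]
    · exact AddSubgroup.mem_closure_singleton.2 ⟨1, one_zsmul a⟩
    · exact AddSubgroup.mem_closure_singleton.2 ⟨-1, by simp⟩
  have hm : n.natAbs * q ≤ q := by
    apply hqmax _ (Nat.mul_pos (Int.natAbs_pos.2 hn0) hq)
    intro x
    have h3 := haS x
    rw [habs] at h3
    push_cast
    exact h3
  have hm1 : n.natAbs = 1 := by
    have := Int.natAbs_pos.2 hn0
    nlinarith
  have habs1 : |a| = 1 / q := by rw [habs, hm1]; simp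
  -- ω = p₀ * a, a = ± 1/q
  rw [zsmul_eq_mul] at hp₀
  rcases abs_choice a with h1 | h1
  · refine ⟨p₀, ?_⟩
    have ha2 : a = 1 / q := by linarith
    rw [← hp₀, ha2]
    field_simp
  · refine ⟨-p₀, ?_⟩
    have ha2 : a = -(1 / q) := by linarith
    rw [← hp₀, ha2]
    push_cast
    field_simp
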